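/- For all nonnegative integers m, n, k, l, the Lie bracket of two Eulerian vector fields satisfies [E_{m,n}, E_{k,l}] = 2(m + n − k − l)·E_{m+k, n+l} as a map ℝ⁴ → ℝ⁴. -/

import Mathlib

/-!
`Z_{m,n}` is homogeneous of degree `2(m + n)`. For radial fields `f • x`, `g • x` with `f`, `g`
homogeneous of degrees `a`, `b`, Euler's identity `Df(x) x = a f(x)` makes the terms `f g x` of
the bracket cancel, leaving `(a - b) f g • x`.
-/

/-- Lie bracket of vector fields on ℝ⁴: [V,W](x) = DV(x)(W(x)) − DW(x)(V(x)). -/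
noncomputable def bracket (V W : (Fin 4 → ℝ) → (Fin 4 → ℝ)) : (Fin 4 → ℝ) → (Fin 4 → ℝ) :=
  fun x => fderiv ℝ V x (W x) - fderiv ℝ W x (V x)

/-- The Eulerian vector field E₀₀(x) = x. -/
def E00 : (Fin 4 → ℝ) → (Fin 4 → ℝ) := fun x => x

/-- The rotational vector fields Θ¹₀₀(x) = (−y₁, x₁, 0, 0) and Θ²₀₀(x) = (0, 0, −y₂, x₂). -/
def Theta0 (i : Fin 2) : (Fin 4 → ℝ) → (Fin 4 → ℝ) :=
  if i = 0 then (fun x => ![-(x 1), x 0, 0, 0]) else (fun x => ![0, 0, -(x 3), x 2])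

/-- Z_{m,n}(x) = (x₁² + y₁²)^m (x₂² + y₂²)^n. -/
def Z (m n : ℕ) : (Fin 4 → ℝ) → ℝ :=
  fun x => ((x 0) ^ 2 + (x 1) ^ 2) ^ m * ((x 2) ^ 2 + (x 3) ^ 2) ^ n

/-- E_{m,n} = Z_{m,n} · E₀₀. -/
def Emn (m n : ℕ) : (Fin 4 → ℝ) → (Fin 4 → ℝ) := fun x => Z m n x • E00 x

/-- Θ^i_{m,n} = Z_{m,n} · Θ^i₀₀. -/
def Thmn (i : Fin 2) (m n : ℕ) : (Fin 4 → ℝ) → (Fin 4 → ℝ) := fun x => Z m n x • Theta0 i x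

section Homogeneous

variable {E : Type*} [NormedAddCommGroup E] [NormedSpace ℝ E]

-- Differentiate `t ↦ f (t • x)` at `t = 1` once by the chain rule and once as `t ^ d * f x`.
theorem fderiv_apply_self_of_homogeneous {f : E → ℝ} {x : E} {d : ℕ}
    (hf : DifferentiableAt ℝ f x) (hom : ∀ t : ℝ, f (t • x) = t ^ d * f x) :
    fderiv ℝ f x x = d * f x := by
  have hchain : HasDerivAt (fun t : ℝ => f (t • x)) (fderiv ℝ f x x) 1 := by
    have hray : HasDerivAt (fun t : ℝ => t • x) x 1 := by
      simpa using (hasDerivAt_id (1 : ℝ)).smul_const x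
    exact hf.hasFDerivAt.comp_hasDerivAt_of_eq 1 hray (one_smul ℝ x).symm
  have hpow : HasDerivAt (fun t : ℝ => f (t • x)) (d * f x) 1 := by
    simp only [hom]
    simpa using (hasDerivAt_pow d (1 : ℝ)).mul_const (f x)
  exact hchain.unique hpow

theorem fderiv_smul_self_apply {f : E → ℝ} {x : E} (hf : DifferentiableAt ℝ f x) (v : E) :
    fderiv ℝ (fun y => f y • y) x v = f x • v + fderiv ℝ f x v • x := by
  rw [fderiv_fun_smul hf differentiableAt_fun_id]
  simp

theorem fderiv_smul_self_sub_fderiv_smul_self_of_homogeneous {f g : E → ℝ} {a b : ℕ}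
    (hf : Differentiable ℝ f) (hg : Differentiable ℝ g)
    (hf_hom : ∀ (t : ℝ) x, f (t • x) = t ^ a * f x)
    (hg_hom : ∀ (t : ℝ) x, g (t • x) = t ^ b * g x) (x : E) :
    fderiv ℝ (fun y => f y • y) x (g x • x) - fderiv ℝ (fun y => g y • y) x (f x • x) =
      (((a : ℝ) - b) * (f x * g x)) • x := by
  rw [fderiv_smul_self_apply (hf x), fderiv_smul_self_apply (hg x), map_smul, map_smul,
    fderiv_apply_self_of_homogeneous (hf x) (hf_hom · x),
    fderiv_apply_self_of_homogeneous (hg x) (hg_hom · x)]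
  match_scalars
  ring

end Homogeneous

theorem Z_differentiable (m n : ℕ) : Differentiable ℝ (Z m n) := by
  unfold Z
  fun_prop

theorem Z_smul (m n : ℕ) (t : ℝ) (x : Fin 4 → ℝ) : Z m n (t • x) = t ^ (2 * (m + n)) * Z m n x := by
  have hsq (a b : ℝ) : (t * a) ^ 2 + (t * b) ^ 2 = t ^ 2 * (a ^ 2 + b ^ 2) := by ring
  simp only [Z, Pi.smul_apply, smul_eq_mul]
  rw [hsq, hsq, mul_pow, mul_pow, ← pow_mul, ← pow_mul]
  ring

theorem Emn_eq_Z_smul_self (m n : ℕ) : Emn m n = fun x => Z m n x • x := rfl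

theorem Z_mul_Z (m n k l : ℕ) (x : Fin 4 → ℝ) : Z m n x * Z k l x = Z (m + k) (n + l) x := by
  simp only [Z, pow_add]
  ring

/-- [E_{m,n}, E_{k,l}] = 2(m+n−k−l)·E_{m+k,n+l}. -/
theorem bracket_Emn_Emn (m n k l : ℕ) :
    bracket (Emn m n) (Emn k l) =
      fun x => (2 * ((m : ℝ) + n - k - l)) • Emn (m + k) (n + l) x := by
  funext x
  have h := fderiv_smul_self_sub_fderiv_smul_self_of_homogeneous (Z_differentiable m n)
    (Z_differentiable k l) (Z_smul m n) (Z_smul k l) x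
  simp only [bracket, Emn_eq_Z_smul_self, h, Z_mul_Z, smul_smul]
  push_cast
  ring_nf
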